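/- Let n ≥ 1 be an integer and let a₀, a₁, …, aₙ be nonnegative real numbers, not all zero, and let ν be the largest index k with aₖ ≠ 0. For ε > 0 set P(ε) = ∑_{i=0}^{n} C(n,i) (2π)^i ε^{n-i} aᵢ and Q(ε) = ∑_{i=0}^{n-1} C(n-1,i) (2π)^{i+1} ε^{n-1-i} a_{i+1}. Then the ratio n·Q(ε)/P(ε) tends to ν as ε tends to 0 from the right. -/

import Mathlib

open Filter Topology Finset

/-!
Since `n C(n-1, i) = (i+1) C(n, i+1)`, the ratio `n Q(ε) / P(ε)` is the average of the index `i`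
with respect to the weights `C(n,i) (2π)^i aᵢ ε^(n-i)`. Dividing numerator and denominator by
`ε^(n-ν)` leaves two polynomials in `ε` whose values at `0` are `ν C(n,ν) (2π)^ν a_ν` and
`C(n,ν) (2π)^ν a_ν ≠ 0`, so the ratio tends to `ν`.
-/

section CommSemiring

variable {R : Type*} [CommSemiring R]

theorem natCast_mul_sum_range_choose_pred (n : ℕ) (w : ℕ → R) :
    (n : R) * ∑ i ∈ range n, ((n - 1).choose i : R) * w (i + 1) =
      ∑ i ∈ range (n + 1), (i : R) * n.choose i * w i := by
  cases n with
  | zero => simp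
  | succ n =>
    rw [sum_range_succ' _ (n + 1), mul_sum, Nat.add_sub_cancel]
    simp only [Nat.cast_zero, zero_mul, add_zero]
    refine sum_congr rfl fun i _ => ?_
    rw [← mul_assoc, ← Nat.cast_mul, Nat.add_one_mul_choose_eq]
    push_cast
    ring

theorem sum_range_mul_pow_sub_eq_pow_mul {n ν : ℕ} {g : ℕ → R} (hνn : ν ≤ n)
    (hg : ∀ k, ν < k → k ≤ n → g k = 0) (x : R) :
    ∑ i ∈ range (n + 1), g i * x ^ (n - i) =
      x ^ (n - ν) * ∑ i ∈ range (ν + 1), g i * x ^ (ν - i) := by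
  rw [← sum_subset (range_subset_range.2 (by omega : ν + 1 ≤ n + 1)), mul_sum]
  · refine sum_congr rfl fun i hi => ?_
    rw [show n - i = (n - ν) + (ν - i) by grind, pow_add]
    ring
  · intro i hi hi'
    simp only [mem_range, not_lt] at hi hi'
    rw [hg i (by omega) (by omega), zero_mul]

theorem tendsto_sum_range_mul_pow_sub_nhds_zero [TopologicalSpace R] [IsTopologicalSemiring R]
    (g : ℕ → R) (ν : ℕ) :
    Tendsto (fun x => ∑ i ∈ range (ν + 1), g i * x ^ (ν - i)) (𝓝 0) (𝓝 (g ν)) := by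
  have hcont : Continuous fun x : R => ∑ i ∈ range (ν + 1), g i * x ^ (ν - i) := by fun_prop
  convert hcont.tendsto 0 using 2
  rw [sum_range_succ, Nat.sub_self, pow_zero, mul_one, sum_eq_zero, zero_add]
  exact fun i hi => by rw [zero_pow (by simp at hi; omega), mul_zero]

end CommSemiring

theorem tendsto_sum_mul_pow_div_sum_pow {𝕜 : Type*} [Field 𝕜] [TopologicalSpace 𝕜]
    [IsTopologicalDivisionRing 𝕜] {n ν : ℕ} {b : ℕ → 𝕜} (f : ℕ → 𝕜) (hνn : ν ≤ n)
    (hbν : b ν ≠ 0) (hb : ∀ k, ν < k → k ≤ n → b k = 0) :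
    Tendsto (fun x => (∑ i ∈ range (n + 1), f i * b i * x ^ (n - i)) /
      ∑ i ∈ range (n + 1), b i * x ^ (n - i)) (𝓝[≠] 0) (𝓝 (f ν)) := by
  have hfb : ∀ k, ν < k → k ≤ n → f k * b k = 0 := fun k hk hkn => by
    rw [hb k hk hkn, mul_zero]
  have hlim := ((tendsto_sum_range_mul_pow_sub_nhds_zero (fun i => f i * b i) ν).div
    (tendsto_sum_range_mul_pow_sub_nhds_zero b ν) hbν).mono_left (nhdsWithin_le_nhds (s := {0}ᶜ))
  rw [mul_div_cancel_right₀ _ hbν] at hlim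
  refine hlim.congr' (eventually_nhdsWithin_of_forall fun x hx => ?_)
  dsimp only [Pi.div_apply]
  rw [sum_range_mul_pow_sub_eq_pow_mul hνn hfb, sum_range_mul_pow_sub_eq_pow_mul hνn hb,
    mul_div_mul_left _ _ (pow_ne_zero _ hx)]

theorem stmt_0_general (n : ℕ) (a : ℕ → ℝ)
    (ν : ℕ) (hνn : ν ≤ n) (haν : a ν ≠ 0) (hmax : ∀ k, ν < k → k ≤ n → a k = 0) :
    Filter.Tendsto
      (fun ε : ℝ =>
        (n : ℝ) *
          (∑ i ∈ Finset.range n,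
            ((n - 1).choose i : ℝ) * (2 * Real.pi) ^ (i + 1) * ε ^ (n - 1 - i) * a (i + 1)) /
          (∑ i ∈ Finset.range (n + 1),
            (n.choose i : ℝ) * (2 * Real.pi) ^ i * ε ^ (n - i) * a i))
      (𝓝[>] (0 : ℝ)) (𝓝 (ν : ℝ)) := by
  set b : ℕ → ℝ := fun i => n.choose i * (2 * Real.pi) ^ i * a i
  have hbν : b ν ≠ 0 := by
    have := Nat.choose_pos hνn
    simp only [b]
    positivity
  have hb : ∀ k, ν < k → k ≤ n → b k = 0 := fun k hk hkn => by simp [b, hmax k hk hkn]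
  have hQ (ε : ℝ) : (n : ℝ) * ∑ i ∈ range n,
      ((n - 1).choose i : ℝ) * (2 * Real.pi) ^ (i + 1) * ε ^ (n - 1 - i) * a (i + 1) =
      ∑ i ∈ range (n + 1), (i : ℝ) * b i * ε ^ (n - i) := by
    calc _ = (n : ℝ) * ∑ i ∈ range n, ((n - 1).choose i : ℝ) *
            ((2 * Real.pi) ^ (i + 1) * ε ^ (n - (i + 1)) * a (i + 1)) := by
          refine congrArg _ (sum_congr rfl fun i _ => ?_)
          rw [Nat.sub_sub, add_comm 1 i]
          ring
      _ = _ := (natCast_mul_sum_range_choose_pred n fun i =>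
          (2 * Real.pi) ^ i * ε ^ (n - i) * a i).trans (sum_congr rfl fun i _ => by ring)
  have hP (ε : ℝ) : ∑ i ∈ range (n + 1), (n.choose i : ℝ) * (2 * Real.pi) ^ i * ε ^ (n - i) * a i =
      ∑ i ∈ range (n + 1), b i * ε ^ (n - i) :=
    sum_congr rfl fun i _ => by ring
  simp only [hQ, hP]
  exact (tendsto_sum_mul_pow_div_sum_pow (fun i => (i : ℝ)) hνn hbν hb).mono_left
    (nhdsGT_le_nhdsNE 0)

/-- For `n ≥ 1`, nonnegative reals `a 0, …, a n`, not all zero, with `ν` the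
largest index `k ≤ n` such that `a k ≠ 0`, setting
`P ε = ∑_{i=0}^{n} C(n,i) (2π)^i ε^(n-i) a i` and
`Q ε = ∑_{i=0}^{n-1} C(n-1,i) (2π)^(i+1) ε^(n-1-i) a (i+1)`,
the ratio `n * Q ε / P ε` tends to `ν` as `ε → 0⁺`. -/
theorem stmt_0 (n : ℕ) (hn : 1 ≤ n) (a : ℕ → ℝ) (ha : ∀ i, i ≤ n → 0 ≤ a i)
    (ν : ℕ) (hνn : ν ≤ n) (haν : a ν ≠ 0) (hmax : ∀ k, ν < k → k ≤ n → a k = 0) :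
    Filter.Tendsto
      (fun ε : ℝ =>
        (n : ℝ) *
          (∑ i ∈ Finset.range n,
            ((n - 1).choose i : ℝ) * (2 * Real.pi) ^ (i + 1) * ε ^ (n - 1 - i) * a (i + 1)) /
          (∑ i ∈ Finset.range (n + 1),
            (n.choose i : ℝ) * (2 * Real.pi) ^ i * ε ^ (n - i) * a i))
      (𝓝[>] (0 : ℝ)) (𝓝 (ν : ℝ)) :=
  stmt_0_general n a ν hνn haν hmax
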